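/- Location of the singular values of the value function: if V is not differentiable at a point w₀ ∈ ℝ, then there exist indices 1 ≤ i ≤ N_u and 1 ≤ j ≤ N_d such that w₀ = R⁻¹·(q·x^u_i + (1 − q)·x^d_j) and β(w₀) = (x^u_i − x^d_j)/(u − d), where q = (R − d)/(u − d); that is, (w₀, β(w₀)) is the intersection point C^u_i ∩ C^d_j of two grid lines. -/

import Mathlib

/-- `f` is affine on the set `s`. -/
def AffOn (f : ℝ → ℝ) (s : Set ℝ) : Prop := ∃ a c : ℝ, ∀ y ∈ s, f y = a * y + c

/-- Left derivative of `f` at `x`. -/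
noncomputable def lDeriv (f : ℝ → ℝ) (x : ℝ) : ℝ := derivWithin f (Set.Iio x) x

/-- Right derivative of `f` at `x`. -/
noncomputable def rDeriv (f : ℝ → ℝ) (x : ℝ) : ℝ := derivWithin f (Set.Ioi x) x

/-- `f` is piecewise affine with partition points `x 1 < x 2 < … < x N`
(no partition points if `N = 0`, in which case `f` is affine on all of `ℝ`). -/
def PWAff (f : ℝ → ℝ) (N : ℕ) (x : ℕ → ℝ) : Prop :=
  (∀ i, 1 ≤ i → i + 1 ≤ N → x i < x (i + 1)) ∧
  (N = 0 → AffOn f Set.univ) ∧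
  (1 ≤ N → AffOn f (Set.Iic (x 1)) ∧ AffOn f (Set.Ici (x N)) ∧
    ∀ i, 1 ≤ i → i + 1 ≤ N → AffOn f (Set.Icc (x i) (x (i + 1))))

/-- `f` belongs to class `H` as witnessed by the points `x 1 < … < x N`:
piecewise linear, concave on `ℝ`, and eventually constant. -/
def ClassHAux (f : ℝ → ℝ) (N : ℕ) (x : ℕ → ℝ) : Prop :=
  PWAff f N x ∧ ConcaveOn ℝ Set.univ f ∧ ∃ xb : ℝ, ∀ y, xb ≤ y → f y = f xb

/-- `f` belongs to class `H`. -/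
def ClassH (f : ℝ → ℝ) : Prop := ∃ N x, ClassHAux f N x

/-- `x 1 < … < x N` are the singular values of the class-`H` function `f`:
they partition `ℝ` into pieces on which `f` is affine and each of them is a genuine
kink, i.e. the right derivative is strictly smaller than the left derivative there. -/
def HasSingVals (f : ℝ → ℝ) (N : ℕ) (x : ℕ → ℝ) : Prop :=
  ClassHAux f N x ∧ ∀ i, 1 ≤ i → i ≤ N → rDeriv f (x i) < lDeriv f (x i)

/-- The dynamic-programming objective
`H(w,b) = R⁻¹ (p f(wR + b(u−R)) + (1−p) g(wR + b(d−R)))`. -/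
noncomputable def Hfun (R u d p : ℝ) (f g : ℝ → ℝ) (w b : ℝ) : ℝ :=
  R⁻¹ * (p * f (w * R + b * (u - R)) + (1 - p) * g (w * R + b * (d - R)))

/-- The value function `V(w) = sup_b H(w,b)`. -/
noncomputable def Vfun (R u d p : ℝ) (f g : ℝ → ℝ) (w : ℝ) : ℝ :=
  ⨆ b : ℝ, Hfun R u d p f g w b

/-- The set of maximizers `B(w) = {b : H(w,b) = V(w)}`. -/
noncomputable def Bset (R u d p : ℝ) (f g : ℝ → ℝ) (w : ℝ) : Set ℝ :=
  {b : ℝ | Hfun R u d p f g w b = Vfun R u d p f g w}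

/-- The minimal optimal strategy `β(w) = min B(w)`. -/
noncomputable def betaFun (R u d p : ℝ) (f g : ℝ → ℝ) (w : ℝ) : ℝ :=
  sInf (Bset R u d p f g w)

/-- The grid line `C^u = {(w,b) : wR + b(u−R) = c}`. -/
def Cu (R u : ℝ) (c : ℝ) : Set (ℝ × ℝ) := {pt | pt.1 * R + pt.2 * (u - R) = c}

/-- The grid line `C^d = {(w,b) : wR + b(d−R) = c}`. -/
def Cd (R d : ℝ) (c : ℝ) : Set (ℝ × ℝ) := {pt | pt.1 * R + pt.2 * (d - R) = c}

/-- The grid `G`, the union of the lines `C^u_i`, `1 ≤ i ≤ Nu`, and `C^d_j`, `1 ≤ j ≤ Nd`. -/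
def Grid (R u d : ℝ) (Nu : ℕ) (xu : ℕ → ℝ) (Nd : ℕ) (xd : ℕ → ℝ) : Set (ℝ × ℝ) :=
  (⋃ i ∈ Finset.Icc 1 Nu, Cu R u (xu i)) ∪ (⋃ j ∈ Finset.Icc 1 Nd, Cd R d (xd j))

/-- The open parallelogram `D_ij`, for `0 ≤ i ≤ Nu`, `0 ≤ j ≤ Nd`, with the conventions
`x^u_0 = x^d_0 = −∞` and `x^u_{Nu+1} = x^d_{Nd+1} = +∞`. -/
def Dset (R u d : ℝ) (Nu : ℕ) (xu : ℕ → ℝ) (Nd : ℕ) (xd : ℕ → ℝ) (i j : ℕ) : Set (ℝ × ℝ) :=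
  {pt | (1 ≤ i → xu i < pt.1 * R + pt.2 * (u - R)) ∧
        (i < Nu → pt.1 * R + pt.2 * (u - R) < xu (i + 1)) ∧
        (1 ≤ j → xd j < pt.1 * R + pt.2 * (d - R)) ∧
        (j < Nd → pt.1 * R + pt.2 * (d - R) < xd (j + 1))}


/-!
Write `H(w, b) = Φ(w R + b (u - R)) + Ψ(w R + b (d - R))` with `Φ`, `Ψ` concave, and let
`b₀ = β(w₀)`, `y₀ = w₀ R + b₀ (u - R)`, `z₀ = w₀ R + b₀ (d - R)`. If `y₀` is not a kink of `f`,
then `Φ` is affine near `y₀` with some slope `a`. Optimality of `b₀` then makes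
`m = -a (u - R) / (d - R)` a local, hence (by concavity) global, supergradient of `Ψ` at `z₀`,
so `V(w) ≤ V(w₀) + (a + m) R (w - w₀)` for all `w`; moving `b` so as to keep `z₀` fixed attains
this bound for `w` near `w₀`. Thus `V` is affine near `w₀`. Hence both `y₀` and `z₀` are kinks,
and the two linear equations determine `w₀` and `β(w₀)`.
-/

open Set Filter Topology

lemma ConcaveOn.le_of_eventually_le {ψ : ℝ → ℝ} (hψ : ConcaveOn ℝ univ ψ) {z₀ m : ℝ}
    (h : ∀ᶠ z in 𝓝 z₀, ψ z ≤ ψ z₀ + m * (z - z₀)) (z : ℝ) :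
    ψ z ≤ ψ z₀ + m * (z - z₀) := by
  have hconc : ConcaveOn ℝ univ fun z => ψ z - m * z :=
    hψ.sub ((LinearMap.mul ℝ ℝ m).convexOn convex_univ)
  have hloc : IsLocalMax (fun z => ψ z - m * z) z₀ :=
    h.mono fun z hz => by linarith
  linarith [IsMaxOn.of_isLocalMax_of_convex_univ hloc hconc z]

lemma ConcaveOn.monotone_of_eq_on_Ici {f : ℝ → ℝ} (hf : ConcaveOn ℝ univ f) {x : ℝ}
    (hconst : ∀ y, x ≤ y → f y = f x) : Monotone f := by
  intro y₁ y₂ h12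
  rcases h12.eq_or_lt with rfl | h12
  · rfl
  set z := max y₂ x + 1
  have hz : y₂ < z := by linarith [le_max_left y₂ x]
  have hzx : x ≤ z := by linarith [le_max_right y₂ x]
  have h1 := hf.slope_anti_adjacent (mem_univ y₁) (mem_univ z) h12 hz
  have h2 := hf.slope_anti_adjacent (mem_univ y₂) (mem_univ (z + 1)) hz (lt_add_one z)
  rw [hconst (z + 1) (by linarith), ← hconst z hzx, sub_self, zero_div] at h2
  have := (le_div_iff₀ (sub_pos.2 h12)).1 (h2.trans h1)
  linarith

lemma ConcaveOn.tendsto_atBot_of_lt {f : ℝ → ℝ} (hf : ConcaveOn ℝ univ f) {y₁ y₂ : ℝ}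
    (h12 : y₁ < y₂) (hf12 : f y₁ < f y₂) : Tendsto f atBot atBot := by
  set s := (f y₂ - f y₁) / (y₂ - y₁)
  have hs : 0 < s := div_pos (by linarith) (by linarith)
  have hle : ∀ y < y₁, f y ≤ f y₁ + s * (y - y₁) := by
    intro y hy
    have h := hf.slope_anti_adjacent (mem_univ y) (mem_univ y₂) hy h12
    rw [le_div_iff₀ (by linarith)] at h
    linarith
  have hlin : Tendsto (fun y => f y₁ + s * (y - y₁)) atBot atBot :=
    tendsto_atBot_add_const_left _ _
      ((tendsto_atBot_add_const_right _ _ tendsto_id).const_mul_atBot hs)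
  exact tendsto_atBot_mono' atBot ((eventually_lt_atBot y₁).mono hle) hlin

lemma Continuous.le_apply_sInf_setOf_eq_iSup {h : ℝ → ℝ} (hc : Continuous h)
    (hlim : Tendsto h (cocompact ℝ) atBot) (b : ℝ) :
    h b ≤ h (sInf {b | h b = ⨆ b', h b'}) := by
  obtain ⟨b₁, hb₁⟩ := hc.exists_forall_ge hlim
  have hsup : ⨆ b', h b' = h b₁ :=
    le_antisymm (ciSup_le hb₁) (le_ciSup ⟨h b₁, forall_mem_range.2 hb₁⟩ b₁)
  obtain ⟨K, hK, hKc⟩ := mem_cocompact.1 (hlim.eventually (eventually_lt_atBot (h b₁)))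
  have hsub : {b | h b = ⨆ b', h b'} ⊆ K := fun b hb => by
    by_contra hbK
    exact (hKc hbK).ne (hb.trans hsup)
  have hmem := (isClosed_eq hc continuous_const).csInf_mem ⟨b₁, hsup.symm⟩ (hK.bddBelow.mono hsub)
  rw [hmem, hsup]
  exact hb₁ b

lemma differentiableAt_iSup_of_le_of_eventually_eq {E ι : Type*} [NormedAddCommGroup E]
    [NormedSpace ℝ E] [Nonempty ι] {G : E → ι → ℝ} {A : E → ℝ} {w₀ : E}
    (hA : DifferentiableAt ℝ A w₀) (hle : ∀ w b, G w b ≤ A w)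
    (heq : ∀ᶠ w in 𝓝 w₀, ∃ b, G w b = A w) :
    DifferentiableAt ℝ (fun w => ⨆ b, G w b) w₀ :=
  hA.congr_of_eventuallyEq <| heq.mono fun w ⟨b, hb⟩ =>
    le_antisymm (ciSup_le (hle w)) (hb ▸ le_ciSup ⟨A w, forall_mem_range.2 (hle w)⟩ b)

theorem ConcaveOn.differentiableAt_iSup_of_eventually_affine {Φ Ψ : ℝ → ℝ}
    (hΦ : ConcaveOn ℝ univ Φ) (hΨ : ConcaveOn ℝ univ Ψ) {R e₁ e₂ w₀ b₀ a c : ℝ} (he₂ : e₂ ≠ 0)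
    (hmax : ∀ b, Φ (w₀ * R + b * e₁) + Ψ (w₀ * R + b * e₂) ≤
      Φ (w₀ * R + b₀ * e₁) + Ψ (w₀ * R + b₀ * e₂))
    (haff : ∀ᶠ y in 𝓝 (w₀ * R + b₀ * e₁), Φ y = a * y + c) :
    DifferentiableAt ℝ (fun w => ⨆ b, Φ (w * R + b * e₁) + Ψ (w * R + b * e₂)) w₀ := by
  set y₀ := w₀ * R + b₀ * e₁
  set z₀ := w₀ * R + b₀ * e₂
  have he : e₂⁻¹ * e₂ = 1 := inv_mul_cancel₀ he₂
  obtain ⟨m, hm⟩ : ∃ m, a * e₁ + m * e₂ = 0 :=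
    ⟨-(a * e₁) * e₂⁻¹, by linear_combination -(a * e₁) * he⟩
  have hΦy₀ : Φ y₀ = a * y₀ + c := haff.self_of_nhds
  have hΦle : ∀ y, Φ y ≤ Φ y₀ + a * (y - y₀) :=
    hΦ.le_of_eventually_le (haff.mono fun y hy => by rw [hy, hΦy₀]; linarith)
  have hΨloc : ∀ᶠ z in 𝓝 z₀, Ψ z ≤ Ψ z₀ + m * (z - z₀) := by
    set β : ℝ → ℝ := fun z => b₀ + (z - z₀) * e₂⁻¹
    have hβy : Tendsto (fun z => w₀ * R + β z * e₁) (𝓝 z₀) (𝓝 y₀) := by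
      have : Continuous fun z => w₀ * R + β z * e₁ := by fun_prop
      simpa [β] using this.tendsto z₀
    filter_upwards [hβy.eventually haff] with z hz
    have h := hmax (β z)
    have hβz : w₀ * R + β z * e₂ = z := by linear_combination (z - z₀) * he
    rw [hβz, hz, hΦy₀] at h
    linear_combination h - (z - z₀) * e₂⁻¹ * hm + m * (z - z₀) * he
  have hΨle := hΨ.le_of_eventually_le hΨloc
  set M := (a + m) * R
  have hle : ∀ w b, Φ (w * R + b * e₁) + Ψ (w * R + b * e₂) ≤ Φ y₀ + Ψ z₀ + M * (w - w₀) := by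
    intro w b
    linear_combination add_le_add (hΦle (w * R + b * e₁)) (hΨle (w * R + b * e₂)) + (b - b₀) * hm
  have htouch : ∀ᶠ w in 𝓝 w₀, ∃ b,
      Φ (w * R + b * e₁) + Ψ (w * R + b * e₂) = Φ y₀ + Ψ z₀ + M * (w - w₀) := by
    set β : ℝ → ℝ := fun w => b₀ - (w - w₀) * R * e₂⁻¹
    have hβy : Tendsto (fun w => w * R + β w * e₁) (𝓝 w₀) (𝓝 y₀) := by
      have : Continuous fun w => w * R + β w * e₁ := by fun_prop
      simpa [β] using this.tendsto w₀
    filter_upwards [hβy.eventually haff] with w hw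
    have hβz : w * R + β w * e₂ = z₀ := by linear_combination -(w - w₀) * R * he
    refine ⟨β w, ?_⟩
    rw [hw, hβz, hΦy₀]
    linear_combination -(w - w₀) * R * e₂⁻¹ * hm + m * (w - w₀) * R * he
  exact differentiableAt_iSup_of_le_of_eventually_eq (by fun_prop) hle htouch

lemma AffOn.exists_eventually_eq {f : ℝ → ℝ} {s : Set ℝ} (hf : AffOn f s) {y₀ : ℝ}
    (hs : s ∈ 𝓝 y₀) : ∃ a c : ℝ, ∀ᶠ y in 𝓝 y₀, f y = a * y + c :=
  let ⟨a, c, hac⟩ := hf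
  ⟨a, c, eventually_of_mem hs hac⟩

lemma PWAff.exists_eventually_affine {f : ℝ → ℝ} {N : ℕ} {x : ℕ → ℝ} (hf : PWAff f N x)
    {y₀ : ℝ} (hy₀ : ∀ i, 1 ≤ i → i ≤ N → x i ≠ y₀) :
    ∃ a c : ℝ, ∀ᶠ y in 𝓝 y₀, f y = a * y + c := by
  obtain ⟨-, hzero, hpos⟩ := hf
  rcases N.eq_zero_or_pos with hN | hN
  · exact (hzero hN).exists_eventually_eq univ_mem
  obtain ⟨hfirst, hlast, hmid⟩ := hpos hN
  by_cases h1 : y₀ < x 1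
  · exact hfirst.exists_eventually_eq (Iic_mem_nhds h1)
  by_cases hN' : x N < y₀
  · exact hlast.exists_eventually_eq (Ici_mem_nhds hN')
  rw [not_lt] at h1 hN'
  set P : ℕ → Prop := fun k => 1 ≤ k ∧ x k < y₀
  set i := Nat.findGreatest P N
  have hi : 1 ≤ i ∧ x i < y₀ :=
    Nat.findGreatest_spec (P := P) hN ⟨le_rfl, h1.lt_of_ne (hy₀ 1 le_rfl hN)⟩
  have hiN : i < N := (Nat.findGreatest_le N).lt_of_ne fun h : i = N => hN'.not_gt (h ▸ hi.2)
  have hnext : y₀ < x (i + 1) := by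
    have hle : y₀ ≤ x (i + 1) :=
      not_lt.1 fun h => Nat.findGreatest_is_greatest (lt_add_one i) hiN ⟨by omega, h⟩
    exact hle.lt_of_ne' (hy₀ (i + 1) (by omega) hiN)
  exact (hmid i hi.1 hiN).exists_eventually_eq (Icc_mem_nhds hi.2 hnext)

namespace ClassHAux

variable {f : ℝ → ℝ} {N : ℕ} {x : ℕ → ℝ}

lemma continuous (hf : ClassHAux f N x) : Continuous f :=
  continuousOn_univ.1 (hf.2.1.continuousOn isOpen_univ)

lemma monotone (hf : ClassHAux f N x) : Monotone f :=
  let ⟨_, hconc, _, hconst⟩ := hf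
  hconc.monotone_of_eq_on_Ici hconst

lemma exists_forall_le (hf : ClassHAux f N x) : ∃ C, ∀ y, f y ≤ C := by
  obtain ⟨xb, hconst⟩ := hf.2.2
  refine ⟨f xb, fun y => ?_⟩
  rcases le_total y xb with hy | hy
  · exact hf.monotone hy
  · exact (hconst y hy).le

lemma tendsto_atBot (hf : ClassHAux f N x) (hnc : ∃ a b, f a ≠ f b) :
    Tendsto f atBot atBot := by
  obtain ⟨a, b, hab⟩ := hnc
  rcases hab.lt_or_gt with h | h <;>
    exact hf.2.1.tendsto_atBot_of_lt (hf.monotone.reflect_lt h) h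

end ClassHAux

section ValueFunction

variable {R u d p : ℝ} {f g : ℝ → ℝ}

lemma continuous_Hfun (hf : Continuous f) (hg : Continuous g) (w : ℝ) :
    Continuous (Hfun R u d p f g w) := by
  unfold Hfun
  fun_prop

lemma tendsto_Hfun_cocompact (hR : 0 < R) (hdR : d < R) (hRu : R < u) (hp0 : 0 < p)
    (hp1 : p < 1) {Cf Cg : ℝ} (hfC : ∀ y, f y ≤ Cf) (hgC : ∀ y, g y ≤ Cg)
    (hf : Tendsto f atBot atBot) (hg : Tendsto g atBot atBot) (w : ℝ) :
    Tendsto (Hfun R u d p f g w) (cocompact ℝ) atBot := by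
  rw [cocompact_eq_atBot_atTop, tendsto_sup]
  constructor <;> refine Tendsto.const_mul_atBot (inv_pos.2 hR) ?_
  · refine tendsto_atBot_add_right_of_ge' _ ((1 - p) * Cg) ?_
      (Eventually.of_forall fun b => mul_le_mul_of_nonneg_left (hgC _) (by linarith))
    exact (hf.comp (tendsto_atBot_add_const_left _ _
      (tendsto_id.atBot_mul_const (sub_pos.2 hRu)))).const_mul_atBot hp0
  · refine tendsto_atBot_add_left_of_ge' _ (p * Cf)
      (Eventually.of_forall fun b => mul_le_mul_of_nonneg_left (hfC _) hp0.le) ?_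
    exact (hg.comp (tendsto_atBot_add_const_left _ _
      (tendsto_id.atTop_mul_const_of_neg (sub_neg.2 hdR)))).const_mul_atBot (sub_pos.2 hp1)

lemma Hfun_swap : Hfun R d u (1 - p) g f = Hfun R u d p f g := by
  ext w b
  unfold Hfun
  ring

lemma Vfun_swap : Vfun R d u (1 - p) g f = Vfun R u d p f g := by
  unfold Vfun
  rw [Hfun_swap]

lemma differentiableAt_Vfun_of_eventually_affine_fst (hR : 0 ≤ R) (hdR : d ≠ R) (hp0 : 0 ≤ p)
    (hp1 : p ≤ 1) (hf : ConcaveOn ℝ univ f) (hg : ConcaveOn ℝ univ g) {w₀ b₀ : ℝ}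
    (hmax : ∀ b, Hfun R u d p f g w₀ b ≤ Hfun R u d p f g w₀ b₀)
    (haff : ∃ a c : ℝ, ∀ᶠ y in 𝓝 (w₀ * R + b₀ * (u - R)), f y = a * y + c) :
    DifferentiableAt ℝ (Vfun R u d p f g) w₀ := by
  obtain ⟨a, c, haff⟩ := haff
  have hH : ∀ w b, Hfun R u d p f g w b =
      R⁻¹ * p * f (w * R + b * (u - R)) + R⁻¹ * (1 - p) * g (w * R + b * (d - R)) := by
    intro w b
    unfold Hfun
    ring
  have hV : Vfun R u d p f g = fun w => ⨆ b,
      R⁻¹ * p * f (w * R + b * (u - R)) + R⁻¹ * (1 - p) * g (w * R + b * (d - R)) := by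
    ext w
    simp only [Vfun, hH]
  simp only [hH] at hmax
  rw [hV]
  refine (hf.smul (by positivity)).differentiableAt_iSup_of_eventually_affine
    (hg.smul (mul_nonneg (by positivity) (sub_nonneg.2 hp1))) (sub_ne_zero.2 hdR) hmax
    (a := R⁻¹ * p * a) (c := R⁻¹ * p * c) ?_
  filter_upwards [haff] with y hy
  rw [smul_eq_mul, hy]
  ring

end ValueFunction

theorem stmt_17_general (R u d p : ℝ) (hd : 0 < d) (hdR : d < R) (hRu : R < u)
    (hp0 : 0 < p) (hp1 : p < 1)
    (q : ℝ) (hq : q = (R - d) / (u - d))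
    (f g : ℝ → ℝ) (Nu Nd : ℕ) (xu xd : ℕ → ℝ)
    (hf : HasSingVals f Nu xu) (hg : HasSingVals g Nd xd)
    (hfnc : ∃ a b : ℝ, f a ≠ f b) (hgnc : ∃ a b : ℝ, g a ≠ g b)
    (w₀ : ℝ) (hndiff : ¬ DifferentiableAt ℝ (Vfun R u d p f g) w₀) :
    ∃ i j : ℕ, 1 ≤ i ∧ i ≤ Nu ∧ 1 ≤ j ∧ j ≤ Nd ∧
      w₀ = R⁻¹ * (q * xu i + (1 - q) * xd j) ∧
      betaFun R u d p f g w₀ = (xu i - xd j) / (u - d) ∧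
      (w₀, betaFun R u d p f g w₀) ∈ Cu R u (xu i) ∩ Cd R d (xd j) := by
  have hR : 0 < R := hd.trans hdR
  obtain ⟨Cf, hfC⟩ := hf.1.exists_forall_le
  obtain ⟨Cg, hgC⟩ := hg.1.exists_forall_le
  set b₀ := betaFun R u d p f g w₀
  have hmax : ∀ b, Hfun R u d p f g w₀ b ≤ Hfun R u d p f g w₀ b₀ :=
    (continuous_Hfun hf.1.continuous hg.1.continuous w₀).le_apply_sInf_setOf_eq_iSup
      (tendsto_Hfun_cocompact hR hdR hRu hp0 hp1 hfC hgC (hf.1.tendsto_atBot hfnc)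
        (hg.1.tendsto_atBot hgnc) w₀)
  obtain ⟨i, hi, hiN, hxi⟩ : ∃ i, 1 ≤ i ∧ i ≤ Nu ∧ xu i = w₀ * R + b₀ * (u - R) := by
    by_contra! hno
    exact hndiff (differentiableAt_Vfun_of_eventually_affine_fst hR.le hdR.ne hp0.le hp1.le
      hf.1.2.1 hg.1.2.1 hmax (hf.1.1.exists_eventually_affine hno))
  obtain ⟨j, hj, hjN, hxj⟩ : ∃ j, 1 ≤ j ∧ j ≤ Nd ∧ xd j = w₀ * R + b₀ * (d - R) := by
    by_contra! hno
    rw [← Hfun_swap] at hmax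
    rw [← Vfun_swap] at hndiff
    exact hndiff (differentiableAt_Vfun_of_eventually_affine_fst hR.le
      hRu.ne' (sub_nonneg.2 hp1.le) (sub_le_self _ hp0.le) hg.1.2.1 hf.1.2.1 hmax
      (hg.1.1.exists_eventually_affine hno))
  have hud : u - d ≠ 0 := sub_ne_zero.2 (hdR.trans hRu).ne'
  refine ⟨i, j, hi, hiN, hj, hjN, ?_, ?_, hxi.symm, hxj.symm⟩
  · rw [hq, hxi, hxj]
    field_simp
    ring
  · rw [hxi, hxj]
    field_simp
    ring

/-- If the value function `V` is not differentiable at `w₀`, then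
`(w₀, β(w₀))` is an intersection point `C^u_i ∩ C^d_j` of two grid lines, i.e.
`w₀ = R⁻¹ (q x^u_i + (1−q) x^d_j)` and `β(w₀) = (x^u_i − x^d_j)/(u−d)`,
where `q = (R−d)/(u−d)`. -/
theorem stmt_17 (R u d p : ℝ) (hd : 0 < d) (hdR : d < R) (hRu : R < u)
    (hp0 : 0 < p) (hp1 : p < 1)
    (q : ℝ) (hq : q = (R - d) / (u - d))
    (f g : ℝ → ℝ) (Nu Nd : ℕ) (xu xd : ℕ → ℝ)
    (hf : HasSingVals f Nu xu) (hg : HasSingVals g Nd xd)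
    (hNu : 1 ≤ Nu) (hNd : 1 ≤ Nd)
    (hfnc : ∃ a b : ℝ, f a ≠ f b) (hgnc : ∃ a b : ℝ, g a ≠ g b)
    (w₀ : ℝ) (hndiff : ¬ DifferentiableAt ℝ (Vfun R u d p f g) w₀) :
    ∃ i j : ℕ, 1 ≤ i ∧ i ≤ Nu ∧ 1 ≤ j ∧ j ≤ Nd ∧
      w₀ = R⁻¹ * (q * xu i + (1 - q) * xd j) ∧
      betaFun R u d p f g w₀ = (xu i - xd j) / (u - d) ∧
      (w₀, betaFun R u d p f g w₀) ∈ Cu R u (xu i) ∩ Cd R d (xd j) :=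
  stmt_17_general R u d p hd hdR hRu hp0 hp1 q hq f g Nu Nd xu xd hf hg hfnc hgnc w₀ hndiff
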